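/- arXiv:math/0601084 — 4 statements merged into one kernel-verified Lean document; each statement's English description precedes it below -/
import Mathlib

section
/- Let Q ∈ S^d, let V ⊂ ℝ^d be an affinely independent set of cardinality d+1, and let c ∈ ℝ^d and r > 0 be such that Q[c − v] = r² for all v ∈ V. Then for every w ∈ ℝ^d one has Q[w − c] − r² = ⟨Q, N_{V,w}⟩. -/
open Matrix Finset MeasureTheory Polynomial

noncomputable section

namespace Vor

variable {d : ℕ}

/-- The space of real `d × d` matrices (quadratic forms live in the symmetric ones). -/
abbrev Md (d : ℕ) := Matrix (Fin d) (Fin d) ℝ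

/-- Trace inner product `⟨A, B⟩ = trace (A * B)` on matrices. -/
def minner (A B : Md d) : ℝ := (A * B).trace

/-- The quadratic form `Q[x] = xᵗ Q x`. -/
def qf (Q : Md d) (x : Fin d → ℝ) : ℝ := x ⬝ᵥ Q.mulVec x

/-- The real vector associated to an integral vector. -/
def intVec (v : Fin d → ℤ) : Fin d → ℝ := fun j => (v j : ℝ)

/-- The lattice `ℤ^d` viewed inside `ℝ^d`. -/
def latticeZ (d : ℕ) : Set (Fin d → ℝ) := Set.range (intVec (d := d))

/-- A standard periodic set `Λ = ⋃ i, (tᵢ + ℤ^d)`. -/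
def IsStdPeriodic (Λ : Set (Fin d → ℝ)) : Prop :=
  ∃ m : ℕ, 0 < m ∧ ∃ t : Fin m → (Fin d → ℝ),
    Λ = {x | ∃ (i : Fin m) (v : Fin d → ℤ), x = t i + intVec v}

/-- The real matrix obtained from an integral matrix. -/
def rmat (U : Matrix (Fin d) (Fin d) ℤ) : Md d := U.map fun z => (z : ℝ)

/-- `U ∈ GL_d(ℤ)`. -/
def IsUnimodular (U : Matrix (Fin d) (Fin d) ℤ) : Prop := IsUnit U.det

/-- The action `Q ↦ Uᵗ Q U`. -/
def conjQ (U : Matrix (Fin d) (Fin d) ℤ) (Q : Md d) : Md d := (rmat U)ᵀ * Q * rmat U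

/-- The action of `GL_d(ℤ)` on subsets of the space of forms. -/
def conjSet (U : Matrix (Fin d) (Fin d) ℤ) (S : Set (Md d)) : Set (Md d) := conjQ U '' S

/-- The rational closure `S̃^d_{≥0}`: positive semidefinite forms that are
`GL_d(ℤ)`-equivalent to a block diagonal form with a zero block and a positive
definite block. -/
def RationalClosure (d : ℕ) : Set (Md d) :=
  {Q | Q.PosSemidef ∧ ∃ U : Matrix (Fin d) (Fin d) ℤ, IsUnimodular U ∧ ∃ k : ℕ, k ≤ d ∧
    (∀ i j : Fin d, ((i : ℕ) < k ∨ (j : ℕ) < k) → conjQ U Q i j = 0) ∧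
    (∀ x : Fin d → ℝ, (∀ i : Fin d, (i : ℕ) < k → x i = 0) → x ≠ 0 → 0 < qf (conjQ U Q) x)}

/-- `P` is a Delone polyhedron of the form `Q` with respect to the point set `Λ`:
`P` is the convex hull of the set `S` of points of `Λ` lying on some sphere
(center `c`, radius `r`) which contains no other point of `Λ` on it or inside. -/
def IsDelonePoly (Λ : Set (Fin d → ℝ)) (Q : Md d) (P : Set (Fin d → ℝ)) : Prop :=
  ∃ S : Set (Fin d → ℝ), S ⊆ Λ ∧ S.Nonempty ∧ P = convexHull ℝ S ∧
    ∃ (c : Fin d → ℝ) (r : ℝ),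
      (∀ v ∈ S, qf Q (c - v) = r ^ 2) ∧ ∀ v ∈ Λ, v ∉ S → r ^ 2 < qf Q (c - v)

/-- The Delone subdivision of `Q` with respect to `Λ`. -/
def DelSub (Λ : Set (Fin d → ℝ)) (Q : Md d) : Set (Set (Fin d → ℝ)) :=
  {P | IsDelonePoly Λ Q P}

/-- The secondary cone of a (Delone) subdivision `D`:
all forms in the rational closure whose Delone subdivision is `D`. -/
def SecCone (Λ : Set (Fin d → ℝ)) (D : Set (Set (Fin d → ℝ))) : Set (Md d) :=
  {Q | Q ∈ RationalClosure d ∧ DelSub Λ Q = D}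

/-- `α` gives the coefficients of an affine combination of the points of `V` representing `w`. -/
def IsAffComb (V : Finset (Fin d → ℝ)) (α : (Fin d → ℝ) → ℝ) (w : Fin d → ℝ) : Prop :=
  (∑ v ∈ V, α v) = 1 ∧ (∑ v ∈ V, α v • v) = w

/-- The form `N_{V,w} = wwᵗ - ∑_{v ∈ V} α_v vvᵗ`. -/
def Nform (V : Finset (Fin d → ℝ)) (α : (Fin d → ℝ) → ℝ) (w : Fin d → ℝ) : Md d :=
  vecMulVec w w - ∑ v ∈ V, α v • vecMulVec v v

/-- A finite set of points is affinely independent. -/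
def AffIndep (V : Finset (Fin d → ℝ)) : Prop :=
  AffineIndependent ℝ (fun v : {x // x ∈ V} => (v : Fin d → ℝ))

/-- Insertion into a finset (classical, to avoid decidability assumptions). -/
def finsert (w : Fin d → ℝ) (V : Finset (Fin d → ℝ)) : Finset (Fin d → ℝ) :=
  letI := Classical.decEq (Fin d → ℝ)
  insert w V

/-- A polyhedron: a finite intersection of closed halfspaces. -/
def IsPolyhedron (P : Set (Fin d → ℝ)) : Prop :=
  ∃ (n : ℕ) (a : Fin n → (Fin d → ℝ)) (b : Fin n → ℝ), P = {x | ∀ i, a i ⬝ᵥ x ≤ b i}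

/-- `F` is a face of `P` (cut out by a supporting hyperplane). -/
def IsFaceOf (F P : Set (Fin d → ℝ)) : Prop :=
  ∃ (a : Fin d → ℝ) (b : ℝ), (∀ x ∈ P, a ⬝ᵥ x ≤ b) ∧ F = {x ∈ P | a ⬝ᵥ x = b}

/-- The (affine) dimension of a set of points. -/
def sdim (S : Set (Fin d → ℝ)) : ℕ := Module.finrank ℝ ↥(vectorSpan ℝ S)

/-- A (face-to-face) polyhedral subdivision of `ℝ^d`. -/
def IsPolySubdiv (D : Set (Set (Fin d → ℝ))) : Prop :=
  (∀ P ∈ D, IsPolyhedron P ∧ P.Nonempty) ∧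
  ⋃₀ D = Set.univ ∧
  (∀ P ∈ D, ∀ F : Set (Fin d → ℝ), IsFaceOf F P → F.Nonempty → F ∈ D) ∧
  ∀ P ∈ D, ∀ P' ∈ D, (P ∩ P').Nonempty → IsFaceOf (P ∩ P') P

/-- `D` has vertex-set `Λ`: every member is the convex hull of its points of `Λ`. -/
def HasVertexSet (Λ : Set (Fin d → ℝ)) (D : Set (Set (Fin d → ℝ))) : Prop :=
  ∀ P ∈ D, P = convexHull ℝ (Λ ∩ P)

/-- A (closed) polyhedral cone in the space of matrices. -/
def IsPolyConeM (C : Set (Md d)) : Prop :=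
  ∃ (n : ℕ) (A : Fin n → Md d), C = {Q | ∀ i, 0 ≤ minner (A i) Q}

/-- `F` is a face of the cone `C` in the space of matrices. -/
def IsFaceOfM (F C : Set (Md d)) : Prop :=
  ∃ A : Md d, (∀ X ∈ C, 0 ≤ minner A X) ∧ F = {X ∈ C | minner A X = 0}

/-- A relatively open polyhedral cone: solutions of finitely many linear equalities and
strict linear inequalities. -/
def IsRelOpenPolyCone (C : Set (Md d)) : Prop :=
  ∃ (n m : ℕ) (A : Fin n → Md d) (B : Fin m → Md d),
    C = {Q | (∀ i, minner (A i) Q = 0) ∧ ∀ j, 0 < minner (B j) Q}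

/-- Condition (a): the linear equalities coming from the `d`-dimensional cells of `D`. -/
def condA (Λ : Set (Fin d → ℝ)) (D : Set (Set (Fin d → ℝ))) (Q : Md d) : Prop :=
  ∀ P ∈ D, sdim P = d →
    ∀ V : Finset (Fin d → ℝ), (↑V : Set (Fin d → ℝ)) ⊆ Λ ∩ P → AffIndep V → V.card = d + 1 →
      ∀ w ∈ Λ ∩ P, ∀ α : (Fin d → ℝ) → ℝ, IsAffComb V α w →
        minner (Nform V α w) Q = 0

/-- Condition (b): the linear strict inequalities coming from the `(d-1)`-dimensional
cells of `D`. -/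
def condB (Λ : Set (Fin d → ℝ)) (D : Set (Set (Fin d → ℝ))) (Q : Md d) : Prop :=
  ∀ F ∈ D, sdim F = d - 1 →
    ∀ P ∈ D, ∀ P' ∈ D, sdim P = d → sdim P' = d → P ≠ P' → F = P ∩ P' →
      ∀ V : Finset (Fin d → ℝ), (↑V : Set (Fin d → ℝ)) ⊆ Λ ∩ F → AffIndep V → V.card = d →
        ∀ w ∈ (Λ ∩ P) \ F, ∀ w' ∈ (Λ ∩ P') \ F,
          ∀ α : (Fin d → ℝ) → ℝ, IsAffComb (finsert w V) α w' →
            0 < minner (Nform (finsert w V) α w') Q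

/-- The lifting map `w_Q(x) = (x, Q[x]) ∈ ℝ^{d+1}`. -/
def liftQ (Q : Md d) (x : Fin d → ℝ) : Fin (d + 1) → ℝ := Fin.snoc x (qf Q x)

/-- Projection `ℝ^{d+1} → ℝ^d` onto the first `d` coordinates. -/
def projd (y : Fin (d + 1) → ℝ) : Fin d → ℝ := fun i => y i.castSucc

/-- `G` is a finite subgroup of `GL_d(ℤ)` (given as a set of integral matrices). -/
def IsFinMatGroup (G : Set (Matrix (Fin d) (Fin d) ℤ)) : Prop :=
  G.Finite ∧ (1 : Matrix (Fin d) (Fin d) ℤ) ∈ G ∧ (∀ g ∈ G, IsUnimodular g) ∧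
    (∀ g ∈ G, ∀ h ∈ G, g * h ∈ G) ∧ ∀ g ∈ G, g⁻¹ ∈ G

/-- The space of invariant forms `F(G)` of `G ≤ GL_d(ℤ)`. -/
def FG (G : Set (Matrix (Fin d) (Fin d) ℤ)) : Set (Md d) :=
  {Q | Q.IsSymm ∧ ∀ g ∈ G, conjQ g Q = Q}

/-- The Bravais group `B(G)`: the pointwise stabilizer of `F(G)` in `GL_d(ℤ)`. -/
def BG (G : Set (Matrix (Fin d) (Fin d) ℤ)) : Set (Matrix (Fin d) (Fin d) ℤ) :=
  {g | IsUnimodular g ∧ ∀ Q ∈ FG G, conjQ g Q = Q}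

/-- The normalizer `N(B(G))` of the Bravais group in `GL_d(ℤ)`. -/
def NBG (G : Set (Matrix (Fin d) (Fin d) ℤ)) : Set (Matrix (Fin d) (Fin d) ℤ) :=
  {n | IsUnimodular n ∧ ∀ b : Matrix (Fin d) (Fin d) ℤ, b ∈ BG G ↔ n⁻¹ * b * n ∈ BG G}

/-- The inhomogeneous minimum `μ(Q) = sup_x inf_{v ∈ ℤ^d} Q[x - v]`. -/
def InhomMin (Q : Md d) : ℝ :=
  ⨆ x : Fin d → ℝ, ⨅ v : Fin d → ℤ, qf Q (x - intVec v)

/-- The bilinear form `(x, y) = xᵗ Q y` associated to `Q`. -/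
def bip (Q : Md d) (x y : Fin d → ℝ) : ℝ := x ⬝ᵥ Q.mulVec y

/-- `F` is a facet of the subdivision `D`: a `(d-1)`-dimensional cell, the intersection of
two adjacent `d`-dimensional cells. -/
def IsFacetOfSubdiv (D : Set (Set (Fin d → ℝ))) (F : Set (Fin d → ℝ)) : Prop :=
  F ∈ D ∧ sdim F = d - 1 ∧
    ∃ P ∈ D, ∃ P' ∈ D, sdim P = d ∧ sdim P' = d ∧ P ≠ P' ∧ F = P ∩ P'

/-- The linear subspace `U` of forms satisfying all equalities of the secondary cone of `D`. -/
def UD (Λ : Set (Fin d → ℝ)) (D : Set (Set (Fin d → ℝ))) : Set (Md d) :=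
  {X | X.IsSymm ∧ condA Λ D X}

/-- `ND` assigns to each facet `F` of `D` the form `N_{D,F}`: the unit-norm form in `U`
such that the projection onto `U` of every form `N_{V∪{w},w'}` attached to `F` is a
positive multiple of it. -/
def IsNDassign (Λ : Set (Fin d → ℝ)) (D : Set (Set (Fin d → ℝ)))
    (ND : Set (Fin d → ℝ) → Md d) : Prop :=
  ∀ F, IsFacetOfSubdiv D F → ND F ∈ UD Λ D ∧ minner (ND F) (ND F) = 1 ∧
    ∀ P ∈ D, ∀ P' ∈ D, sdim P = d → sdim P' = d → P ≠ P' → F = P ∩ P' →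
      ∀ V : Finset (Fin d → ℝ), (↑V : Set (Fin d → ℝ)) ⊆ Λ ∩ F → AffIndep V → V.card = d →
        ∀ w ∈ (Λ ∩ P) \ F, ∀ w' ∈ (Λ ∩ P') \ F,
          ∀ α : (Fin d → ℝ) → ℝ, IsAffComb (finsert w V) α w' →
            ∃ β : ℝ, 0 < β ∧ ∀ X ∈ UD Λ D,
              minner (Nform (finsert w V) α w') X = β * minner (ND F) X

/-- The set `R_F` of facets of `D` whose form `N_{D,F'}` projects onto `T` to a positive
multiple of `NF`. -/
def RFset (Λ : Set (Fin d → ℝ)) (D : Set (Set (Fin d → ℝ)))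
    (ND : Set (Fin d → ℝ) → Md d) (T : Set (Md d)) (NF : Md d) :
    Set (Set (Fin d → ℝ)) :=
  {F | IsFacetOfSubdiv D F ∧ ∃ γ : ℝ, 0 < γ ∧ ∀ X ∈ T, minner (ND F) X = γ * minner NF X}

/-- The chain relation on the facets of `R_F`: connected by a chain of adjacent
`d`-dimensional cells of `D`. -/
def FlipRel (D RFs : Set (Set (Fin d → ℝ))) (F1 F2 : Set (Fin d → ℝ)) : Prop :=
  ∃ (n : ℕ) (Fch : Fin (n + 1) → Set (Fin d → ℝ)) (Pch : Fin (n + 2) → Set (Fin d → ℝ)),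
    Fch 0 = F1 ∧ Fch (Fin.last n) = F2 ∧ (∀ i, Fch i ∈ RFs) ∧
    ∀ i : Fin (n + 1), Pch i.castSucc ∈ D ∧ Pch i.succ ∈ D ∧
      sdim (Pch i.castSucc) = d ∧ sdim (Pch i.succ) = d ∧
      Fch i = Pch i.castSucc ∩ Pch i.succ

/-- `C` is an equivalence class of the chain relation on `RFs`. -/
def IsEqClass (D RFs C : Set (Set (Fin d → ℝ))) : Prop :=
  C ⊆ RFs ∧ C.Nonempty ∧ ∀ F1 ∈ C, ∀ F2 ∈ RFs, (FlipRel D RFs F1 F2 ↔ F2 ∈ C)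

/-- The vertex set `V_C` of an equivalence class `C`: all vertices of `d`-dimensional
cells of `D` having a facet in `C`. -/
def VCset (Λ : Set (Fin d → ℝ)) (D C : Set (Set (Fin d → ℝ))) : Set (Fin d → ℝ) :=
  {x | ∃ P ∈ D, sdim P = d ∧ (∃ F ∈ C, IsFaceOf F P) ∧ x ∈ Λ ∩ P}

/-- A lower facet of a set in `ℝ^{d+1}`: a facet whose outer normal has negative last
coordinate. -/
def IsLowerFacet (S F : Set (Fin (d + 1) → ℝ)) : Prop :=
  ∃ (a : Fin (d + 1) → ℝ) (b : ℝ), (∀ x ∈ S, a ⬝ᵥ x ≤ b) ∧ F = {x ∈ S | a ⬝ᵥ x = b} ∧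
    Module.finrank ℝ ↥(vectorSpan ℝ F) = d ∧ a (Fin.last d) < 0

/-- An upper facet of a set in `ℝ^{d+1}`: a facet whose outer normal has positive last
coordinate. -/
def IsUpperFacet (S F : Set (Fin (d + 1) → ℝ)) : Prop :=
  ∃ (a : Fin (d + 1) → ℝ) (b : ℝ), (∀ x ∈ S, a ⬝ᵥ x ≤ b) ∧ F = {x ∈ S | a ⬝ᵥ x = b} ∧
    Module.finrank ℝ ↥(vectorSpan ℝ F) = d ∧ 0 < a (Fin.last d)

/-- If the points of an affinely independent set `V` of cardinality `d+1`
lie at distance `r` (w.r.t. `Q`) from `c`, then for every `w` one has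
`Q[w - c] - r² = ⟨Q, N_{V,w}⟩`. -/
theorem statement4 (d : ℕ) (Q : Md d) (hQ : Q.IsSymm)
    (V : Finset (Fin d → ℝ)) (hV : AffIndep V) (hVcard : V.card = d + 1)
    (c : Fin d → ℝ) (r : ℝ) (hr : 0 < r)
    (hsphere : ∀ v ∈ V, qf Q (c - v) = r ^ 2)
    (w : Fin d → ℝ) (α : (Fin d → ℝ) → ℝ) (hα : IsAffComb V α w) :
    qf Q (w - c) - r ^ 2 = minner Q (Nform V α w) := by
  obtain ⟨hα1, hα2⟩ := hα
  have hmv : ∀ x : Fin d → ℝ, (Q * vecMulVec x x).trace = qf Q x := by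
    intro x
    simp only [Matrix.trace, Matrix.diag, Matrix.mul_apply, vecMulVec_apply, qf,
      dotProduct, Matrix.mulVec, Finset.mul_sum]
    apply Finset.sum_congr rfl; intro i _
    apply Finset.sum_congr rfl; intro j _
    ring
  have hmin : minner Q (Nform V α w) = qf Q w - ∑ v ∈ V, α v * qf Q v := by
    simp only [minner, Nform, Matrix.mul_sub, Finset.mul_sum, Matrix.mul_smul,
      Matrix.trace_sub, Matrix.trace_sum, Matrix.trace_smul, hmv, smul_eq_mul]
  have expand : ∀ x y : Fin d → ℝ,
      qf Q (x - y) = bip Q x x - bip Q x y - bip Q y x + bip Q y y := by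
    intro x y
    simp only [qf, bip, Matrix.mulVec_sub, dotProduct_sub, sub_dotProduct]
    ring
  have hqb : ∀ x : Fin d → ℝ, qf Q x = bip Q x x := fun _ => rfl
  let L : (Fin d → ℝ) →ₗ[ℝ] ℝ :=
    { toFun := fun y => c ⬝ᵥ Q.mulVec y
      map_add' := fun a b => by simp [Matrix.mulVec_add, dotProduct_add]
      map_smul' := fun s a => by simp [Matrix.mulVec_smul, dotProduct_smul] }
  let L' : (Fin d → ℝ) →ₗ[ℝ] ℝ :=
    { toFun := fun y => y ⬝ᵥ Q.mulVec c
      map_add' := fun a b => by simp [add_dotProduct]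
      map_smul' := fun s a => by simp [smul_dotProduct] }
  have hsum1 : ∑ v ∈ V, α v * bip Q c v = bip Q c w := by
    have := (map_sum L (f := fun v => α v • v) (s := V)).symm
    simp only [_root_.map_smul, smul_eq_mul] at this
    simpa [bip, L, hα2] using this
  have hsum2 : ∑ v ∈ V, α v * bip Q v c = bip Q w c := by
    have := (map_sum L' (f := fun v => α v • v) (s := V)).symm
    simp only [_root_.map_smul, smul_eq_mul] at this
    simpa [bip, L', hα2] using this
  have hsph : ∑ v ∈ V, α v * qf Q (c - v) = r ^ 2 := by
    calc ∑ v ∈ V, α v * qf Q (c - v) = ∑ v ∈ V, α v * r ^ 2 := by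
          exact Finset.sum_congr rfl fun v hv => by rw [hsphere v hv]
      _ = r ^ 2 := by rw [← Finset.sum_mul, hα1, one_mul]
  have e1 : ∑ v ∈ V, α v * qf Q (c - v) =
      (∑ v ∈ V, α v) * bip Q c c - (∑ v ∈ V, α v * bip Q c v)
        - (∑ v ∈ V, α v * bip Q v c) + ∑ v ∈ V, α v * bip Q v v := by
    rw [Finset.sum_mul, ← Finset.sum_sub_distrib, ← Finset.sum_sub_distrib,
      ← Finset.sum_add_distrib]
    exact Finset.sum_congr rfl fun v _ => by rw [expand]; ring
  rw [e1, hα1, one_mul, hsum1, hsum2] at hsph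
  rw [hmin, expand w c, hqb w]
  have h2 : ∑ v ∈ V, α v * qf Q v = ∑ v ∈ V, α v * bip Q v v := rfl
  rw [h2]
  linarith [hsph]

end Vor

end
end

section
/- Let v_1, …, v_{d+1} ∈ ℝ^d be affinely independent points with positive orientation, let w ∈ ℝ^d, and set V = {v_1, …, v_{d+1}}. Then for every Q ∈ S^d the sign of the (d+2)×(d+2) determinant whose first row is (1, …, 1, 1), whose next d rows are the columns v_1, …, v_{d+1}, w, and whose last row is (Q[v_1], …, Q[v_{d+1}], Q[w]), equals the sign of ⟨Q, N_{V,w}⟩. -/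
open Matrix Finset MeasureTheory Polynomial

noncomputable section

namespace Vor

variable {d : ℕ}

/-- The `(d+2) × (d+2)` matrix of the chirotope: first row all ones, next `d` rows the
coordinates of the points, last row the values of the quadratic form. -/
def chiMat (d : ℕ) (Q : Md d) (p : Fin (d + 2) → (Fin d → ℝ)) :
    Matrix (Fin (d + 2)) (Fin (d + 2)) ℝ :=
  Matrix.of fun i j =>
    if hi : (i : ℕ) = 0 then 1
    else if hi' : (i : ℕ) < d + 1 then p j ⟨(i : ℕ) - 1, by omega⟩
    else qf Q (p j)

/-- The `(d+1) × (d+1)` orientation matrix whose columns are `(1, vⱼ)`. -/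
def oriMat (d : ℕ) (v : Fin (d + 1) → (Fin d → ℝ)) :
    Matrix (Fin (d + 1)) (Fin (d + 1)) ℝ :=
  Matrix.of fun i j =>
    if hi : (i : ℕ) = 0 then 1
    else v j ⟨(i : ℕ) - 1, by have := i.isLt; omega⟩

/-- The vertex set `{v₁, …, v_{d+1}}` as a finset (classical). -/
def vertsOf (d : ℕ) (v : Fin (d + 1) → (Fin d → ℝ)) : Finset (Fin d → ℝ) :=
  letI := Classical.decEq (Fin d → ℝ)
  Finset.image v Finset.univ

/-! Subtracting `∑ α_{v_j} · (column j)` from the column of `w` in the chirotope matrix leaves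
the column `(0, …, 0, Q[w] - ∑ α_v Q[v]) = (0, …, 0, ⟨Q, N_{V,w}⟩)`, because the first `d + 1`
rows are affine in the point. Expanding along it, the chirotope determinant is
`⟨Q, N_{V,w}⟩` times the orientation determinant. -/

theorem _root_.Matrix.det_eq_mul_det_submatrix_castSucc_of_col_last {R : Type*} [CommRing R]
    {n : ℕ} (M : Matrix (Fin (n + 1)) (Fin (n + 1)) R) (c : Fin n → R) (t : R)
    (hcast : ∀ i : Fin n, M i.castSucc (Fin.last n) = ∑ j, c j * M i.castSucc j.castSucc)
    (hlast : M (Fin.last n) (Fin.last n) = ∑ j, c j * M (Fin.last n) j.castSucc + t) :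
    M.det = t * (M.submatrix Fin.castSucc Fin.castSucc).det := by
  have hcol : (fun i => M i (Fin.last n)) =
      (fun i => ∑ k, (Fin.snoc c 0 : Fin (n + 1) → R) k • M i k) +
        t • Pi.single (Fin.last n) 1 := by
    funext i
    simp only [Pi.add_apply, Pi.smul_apply, Fin.sum_univ_castSucc, Fin.snoc_castSucc,
      Fin.snoc_last, smul_eq_mul]
    induction i using Fin.lastCases with
    | last => simp [hlast]
    | cast i => simp [hcast]
  calc M.det = (M.updateCol (Fin.last n) fun i => M i (Fin.last n)).det := by
        rw [updateCol_eq_self]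
    _ = t * (M.updateCol (Fin.last n) (Pi.single (Fin.last n) 1)).det := by
        rw [hcol, det_updateCol_add, det_updateCol_sum, Fin.snoc_last, zero_smul, zero_add,
          det_updateCol_smul]
    _ = t * (M.submatrix Fin.castSucc Fin.castSucc).det := by
        rw [← det_transpose, ← updateRow_transpose, ← adjugate_apply,
          adjugate_fin_succ_eq_det_submatrix, Fin.succAbove_last, ← two_mul, pow_mul,
          ← transpose_submatrix, det_transpose]
        simp

theorem _root_.Real.sign_mul_of_pos_right (a : ℝ) {b : ℝ} (hb : 0 < b) :
    Real.sign (a * b) = Real.sign a := by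
  rcases lt_trichotomy a 0 with ha | rfl | ha
  · rw [Real.sign_of_neg ha, Real.sign_of_neg (mul_neg_of_neg_of_pos ha hb)]
  · rw [zero_mul]
  · rw [Real.sign_of_pos ha, Real.sign_of_pos (mul_pos ha hb)]

theorem _root_.Fin.cons_one_sum_smul {R ι : Type*} [Semiring R] [Fintype ι] {n : ℕ}
    (a : ι → R) (p : ι → Fin n → R) (ha : ∑ j, a j = 1) :
    (Fin.cons 1 (∑ j, a j • p j) : Fin (n + 1) → R) = ∑ j, a j • Fin.cons 1 (p j) := by
  ext i
  induction i using Fin.cases <;> simp [Finset.sum_apply, ha]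

lemma trace_mul_vecMulVec_self (Q : Md d) (x : Fin d → ℝ) :
    (Q * vecMulVec x x).trace = qf Q x := by
  rw [mul_vecMulVec, trace_vecMulVec, dotProduct_comm]
  rfl

lemma minner_Nform (Q : Md d) (V : Finset (Fin d → ℝ)) (α : (Fin d → ℝ) → ℝ)
    (w : Fin d → ℝ) : minner Q (Nform V α w) = qf Q w - ∑ u ∈ V, α u * qf Q u := by
  simp only [minner, Nform, Matrix.mul_sub, Finset.mul_sum, mul_smul_comm, trace_sub,
    trace_sum, trace_smul, trace_mul_vecMulVec_self, smul_eq_mul]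

lemma sum_vertsOf {β : Type*} [AddCommMonoid β] {v : Fin (d + 1) → Fin d → ℝ}
    (hv : Function.Injective v) (g : (Fin d → ℝ) → β) :
    ∑ u ∈ vertsOf d v, g u = ∑ j, g (v j) :=
  letI := Classical.decEq (Fin d → ℝ)
  Finset.sum_image hv.injOn

lemma oriMat_apply (v : Fin (d + 1) → Fin d → ℝ) (i j : Fin (d + 1)) :
    oriMat d v i j = (Fin.cons 1 (v j) : Fin (d + 1) → ℝ) i := by
  induction i using Fin.cases <;> simp [oriMat]

lemma chiMat_castSucc_apply (Q : Md d) (p : Fin (d + 2) → Fin d → ℝ) (i : Fin (d + 1))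
    (j : Fin (d + 2)) :
    chiMat d Q p i.castSucc j = (Fin.cons 1 (p j) : Fin (d + 1) → ℝ) i := by
  induction i using Fin.cases <;> simp [chiMat]

lemma chiMat_last_apply (Q : Md d) (p : Fin (d + 2) → Fin d → ℝ) (j : Fin (d + 2)) :
    chiMat d Q p (Fin.last (d + 1)) j = qf Q (p j) := by
  simp [chiMat]

lemma chiMat_snoc_submatrix_castSucc (Q : Md d) (v : Fin (d + 1) → Fin d → ℝ)
    (w : Fin d → ℝ) :
    (chiMat d Q (Fin.snoc v w)).submatrix Fin.castSucc Fin.castSucc = oriMat d v := by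
  ext i j
  rw [submatrix_apply, chiMat_castSucc_apply, oriMat_apply, Fin.snoc_castSucc]

theorem statement5_general (d : ℕ) (Q : Md d)
    (v : Fin (d + 1) → (Fin d → ℝ)) (hv : AffineIndependent ℝ v)
    (hori : 0 < (oriMat d v).det) (w : Fin d → ℝ)
    (α : (Fin d → ℝ) → ℝ) (hα : IsAffComb (vertsOf d v) α w) :
    Real.sign (chiMat d Q (Fin.snoc v w)).det =
      Real.sign (minner Q (Nform (vertsOf d v) α w)) := by
  obtain ⟨hα_sum, hα_comb⟩ := hα
  rw [sum_vertsOf hv.injective] at hα_sum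
  rw [sum_vertsOf hv.injective (fun u => α u • u)] at hα_comb
  have hdet : (chiMat d Q (Fin.snoc v w)).det =
      minner Q (Nform (vertsOf d v) α w) * (oriMat d v).det := by
    rw [← chiMat_snoc_submatrix_castSucc Q v w]
    refine det_eq_mul_det_submatrix_castSucc_of_col_last _ (fun j => α (v j)) _ (fun i => ?_) ?_
    · rw [chiMat_castSucc_apply, Fin.snoc_last, ← hα_comb, Fin.cons_one_sum_smul _ _ hα_sum]
      simp only [chiMat_castSucc_apply, Fin.snoc_castSucc, Finset.sum_apply, Pi.smul_apply,
        smul_eq_mul]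
    · simp only [chiMat_last_apply, Fin.snoc_castSucc, Fin.snoc_last, minner_Nform,
        sum_vertsOf hv.injective]
      ring
  rw [hdet, Real.sign_mul_of_pos_right _ hori]

/-- For positively oriented affinely independent points
`v₁, …, v_{d+1}` and any point `w`, the sign of the chirotope determinant equals the
sign of `⟨Q, N_{V,w}⟩`. -/
theorem statement5 (d : ℕ) (Q : Md d) (hQ : Q.IsSymm)
    (v : Fin (d + 1) → (Fin d → ℝ)) (hv : AffineIndependent ℝ v)
    (hori : 0 < (oriMat d v).det) (w : Fin d → ℝ)
    (α : (Fin d → ℝ) → ℝ) (hα : IsAffComb (vertsOf d v) α w) :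
    Real.sign (chiMat d Q (Fin.snoc v w)).det =
      Real.sign (minner Q (Nform (vertsOf d v) α w)) :=
  statement5_general d Q v hv hori w α hα

end Vor

end
end

section
/- Let P be a d-dimensional polyhedron in ℝ^d (with vertex-set in a standard periodic set Λ), let U be the linear subspace of all Q ∈ S^d satisfying ⟨N_{V,w}, Q⟩ = 0 for all affinely independent sets V ⊆ vert P of cardinality d+1 and all w ∈ vert P, and let F be a facet of P. If V is an affinely independent subset of vert F of cardinality d, u, w ∈ vert P \ F, and w' ∈ ℝ^d, then the orthogonal projections onto U satisfy π_U(N_{V∪{w},w'}) = π_U(N_{V∪{u},w'}). -/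
open Matrix Finset MeasureTheory Polynomial

noncomputable section

namespace Vor

variable {d : ℕ}

/-!
Write `F = {x ∈ P | a ⬝ᵥ x = b}` for a supporting hyperplane of `P`. The affine functional
`x ↦ a ⬝ᵥ x - b` vanishes on `V` and not at `w`, so `V ∪ {w}` is an affinely independent set of
`d + 1` vertices of `P`, and evaluating it on `w' = ∑ α_x x` gives
`α_w (a ⬝ᵥ w - b) = α'_u (a ⬝ᵥ u - b)`.

If `α'_u ≠ 0`, solving `w' = ∑ α'_x x` for `u` writes `u` as an affine combination `β` of `V ∪ {w}`,
and `N_{V∪{w},w'} - N_{V∪{u},w'} = α'_u N_{V∪{w},u}`, which is orthogonal to `U`.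
If `α'_u = 0`, then also `α_w = 0`, both forms are `N_{V,w'}`, and the coefficients agree on `V`
by affine independence of `V`.
-/

section Finsert

variable {w x : Fin d → ℝ} {V : Finset (Fin d → ℝ)}

theorem finsert_eq_insert [DecidableEq (Fin d → ℝ)] : finsert w V = insert w V := by
  unfold finsert
  congr
  exact Subsingleton.elim _ _

theorem mem_finsert : x ∈ finsert w V ↔ x = w ∨ x ∈ V := by
  classical
  rw [finsert_eq_insert, Finset.mem_insert]

theorem card_finsert (hwV : w ∉ V) : (finsert w V).card = V.card + 1 := by
  classical
  rw [finsert_eq_insert, Finset.card_insert_of_notMem hwV]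

theorem sum_finsert {M : Type*} [AddCommMonoid M] (hwV : w ∉ V) (f : (Fin d → ℝ) → M) :
    ∑ x ∈ finsert w V, f x = f w + ∑ x ∈ V, f x := by
  classical
  rw [finsert_eq_insert, Finset.sum_insert hwV]

theorem sum_finsert_of_eq_zero {M : Type*} [AddCommMonoid M] {f : (Fin d → ℝ) → M}
    (hf : f w = 0) : ∑ x ∈ finsert w V, f x = ∑ x ∈ V, f x := by
  classical
  rw [finsert_eq_insert, Finset.sum_insert_zero hf]

end Finsert

theorem minner_smul_left (c : ℝ) (A X : Md d) : minner (c • A) X = c * minner A X := by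
  simp [minner]

theorem minner_zero_left (X : Md d) : minner 0 X = 0 := by
  simp [minner]

section Hyperplane

variable {a w : Fin d → ℝ} {b : ℝ} {V : Finset (Fin d → ℝ)}

theorem dotProduct_sum_smul_sub_sum_mul (hV : ∀ v ∈ V, a ⬝ᵥ v = b) (hwV : w ∉ V)
    (γ : (Fin d → ℝ) → ℝ) :
    a ⬝ᵥ (∑ x ∈ finsert w V, γ x • x) - (∑ x ∈ finsert w V, γ x) * b = γ w * (a ⬝ᵥ w - b) := by
  have hV' : ∑ v ∈ V, a ⬝ᵥ (γ v • v) = (∑ v ∈ V, γ v) * b := by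
    rw [Finset.sum_mul]
    exact Finset.sum_congr rfl fun v hv => by rw [dotProduct_smul, hV v hv, smul_eq_mul]
  rw [sum_finsert hwV, sum_finsert hwV, dotProduct_add, dotProduct_sum, hV', dotProduct_smul,
    smul_eq_mul]
  ring

theorem IsAffComb.dotProduct_sub (hV : ∀ v ∈ V, a ⬝ᵥ v = b) (hwV : w ∉ V)
    {α : (Fin d → ℝ) → ℝ} {x : Fin d → ℝ} (hα : IsAffComb (finsert w V) α x) :
    a ⬝ᵥ x - b = α w * (a ⬝ᵥ w - b) := by
  simpa only [hα.1, hα.2, one_mul] using dotProduct_sum_smul_sub_sum_mul hV hwV α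

theorem AffIndep.finsert (hVi : AffIndep V) (hV : ∀ v ∈ V, a ⬝ᵥ v = b) (hwV : w ∉ V)
    (hw : a ⬝ᵥ w ≠ b) : AffIndep (finsert w V) := by
  by_contra h
  obtain ⟨f, hf₁, hf₀, x, hx, hfx⟩ := exists_nontrivial_relation_sum_zero_of_not_affine_ind h
  have hfw : f w = 0 := by
    have := dotProduct_sum_smul_sub_sum_mul hV hwV f
    rw [hf₁, hf₀, dotProduct_zero, zero_mul, sub_zero] at this
    exact (mul_eq_zero.1 this.symm).resolve_right (sub_ne_zero.2 hw)
  rw [sum_finsert hwV, hfw, zero_add] at hf₀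
  rw [sum_finsert hwV, hfw, zero_smul, zero_add] at hf₁
  rcases mem_finsert.1 hx with rfl | hxV
  · exact hfx hfw
  · exact hfx (hVi.eq_zero_of_sum_eq_zero_subtype hf₀ hf₁ x hxV)

end Hyperplane

section Exchange

variable {V : Finset (Fin d → ℝ)} {u w w' : Fin d → ℝ} {α α' : (Fin d → ℝ) → ℝ}

open Classical in
/-- The coefficients of `u` over `V ∪ {w}` obtained by solving
`∑_{V ∪ {u}} α'_x x = ∑_{V ∪ {w}} α_x x` for `u`. -/
def exchangeCoeff (α α' : (Fin d → ℝ) → ℝ) (u w : Fin d → ℝ) : (Fin d → ℝ) → ℝ :=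
  fun x => (α x - if x = w then 0 else α' x) / α' u

theorem smul_sum_exchangeCoeff {M : Type*} [AddCommGroup M] [Module ℝ M] (hwV : w ∉ V)
    (huV : u ∉ V) (hc : α' u ≠ 0) (g : (Fin d → ℝ) → M) :
    α' u • ∑ x ∈ finsert w V, exchangeCoeff α α' u w x • g x =
      ∑ x ∈ finsert w V, α x • g x - ∑ x ∈ finsert u V, α' x • g x + α' u • g u := by
  have hmul : ∀ x, α' u * exchangeCoeff α α' u w x = α x - if x = w then 0 else α' x :=
    fun x => mul_div_cancel₀ _ hc
  have hV : ∑ v ∈ V, (α' u * exchangeCoeff α α' u w v) • g v =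
      ∑ v ∈ V, α v • g v - ∑ v ∈ V, α' v • g v := by
    rw [← Finset.sum_sub_distrib]
    refine Finset.sum_congr rfl fun v hv => ?_
    rw [hmul, if_neg (ne_of_mem_of_not_mem hv hwV), sub_smul]
  rw [Finset.smul_sum]
  simp_rw [smul_smul]
  rw [sum_finsert hwV, sum_finsert hwV, sum_finsert huV, hV, hmul, if_pos rfl, sub_zero]
  abel

theorem isAffComb_exchangeCoeff (hwV : w ∉ V) (huV : u ∉ V) (hc : α' u ≠ 0)
    (hα : IsAffComb (finsert w V) α w') (hα' : IsAffComb (finsert u V) α' w') :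
    IsAffComb (finsert w V) (exchangeCoeff α α' u w) u := by
  constructor
  · have := smul_sum_exchangeCoeff (α := α) hwV huV hc fun _ => (1 : ℝ)
    simp only [smul_eq_mul, mul_one] at this
    rw [hα.1, hα'.1, sub_self, zero_add] at this
    exact mul_left_cancel₀ hc (this.trans (mul_one _).symm)
  · have := smul_sum_exchangeCoeff (α := α) hwV huV hc id
    simp only [id] at this
    rw [hα.2, hα'.2, sub_self, zero_add] at this
    exact smul_right_injective _ hc this

theorem Nform_sub_Nform_eq_smul_Nform (hwV : w ∉ V) (huV : u ∉ V) (hc : α' u ≠ 0) :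
    Nform (finsert w V) α w' - Nform (finsert u V) α' w' =
      α' u • Nform (finsert w V) (exchangeCoeff α α' u w) u := by
  unfold Nform
  rw [smul_sub, smul_sum_exchangeCoeff hwV huV hc]
  abel

theorem Nform_finsert_of_eq_zero (hα : α w = 0) : Nform (finsert w V) α w' = Nform V α w' := by
  rw [Nform, Nform, sum_finsert_of_eq_zero (by rw [hα, zero_smul])]

theorem IsAffComb.of_finsert_of_eq_zero (hα : IsAffComb (finsert w V) α w') (hw : α w = 0) :
    IsAffComb V α w' := by
  rwa [IsAffComb, sum_finsert_of_eq_zero hw, sum_finsert_of_eq_zero (by rw [hw, zero_smul])] at hα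

theorem Nform_eq_of_isAffComb (hVi : AffIndep V) (hα : IsAffComb V α w')
    (hα' : IsAffComb V α' w') : Nform V α w' = Nform V α' w' := by
  have hcoeff := hVi.eq_of_sum_eq_sum_subtype (hα.1.trans hα'.1.symm) (hα.2.trans hα'.2.symm)
  rw [Nform, Nform, Finset.sum_congr rfl fun v hv => by rw [hcoeff v hv]]

end Exchange

theorem statement7_general (d : ℕ) (Λ : Set (Fin d → ℝ))
    (P : Set (Fin d → ℝ))
    (F : Set (Fin d → ℝ)) (hF : IsFaceOf F P)
    (V : Finset (Fin d → ℝ))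
    (hV : (↑V : Set (Fin d → ℝ)) ⊆ Λ ∩ F)
    (hVi : AffIndep V) (hVc : V.card = d)
    (u w : Fin d → ℝ) (hu : u ∈ (Λ ∩ P) \ F) (hw : w ∈ (Λ ∩ P) \ F) (w' : Fin d → ℝ)
    (α α' : (Fin d → ℝ) → ℝ)
    (hα : IsAffComb (finsert w V) α w') (hα' : IsAffComb (finsert u V) α' w') :
    ∀ X : Md d, X.IsSymm →
      (∀ W : Finset (Fin d → ℝ), (↑W : Set (Fin d → ℝ)) ⊆ Λ ∩ P → AffIndep W →
        W.card = d + 1 → ∀ u' ∈ Λ ∩ P, ∀ β : (Fin d → ℝ) → ℝ, IsAffComb W β u' →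
          minner (Nform W β u') X = 0) →
      minner (Nform (finsert w V) α w' - Nform (finsert u V) α' w') X = 0 := by
  intro X _ hX
  obtain ⟨a, b, -, rfl⟩ := hF
  have hVb : ∀ v ∈ V, a ⬝ᵥ v = b := fun v hv => (hV hv).2.2
  have hwV : w ∉ V := fun h => hw.2 (hV h).2
  have huV : u ∉ V := fun h => hu.2 (hV h).2
  have hwb : a ⬝ᵥ w ≠ b := fun h => hw.2 ⟨hw.1.2, h⟩
  by_cases hc : α' u = 0
  · have hαw : α w = 0 := by
      have h := (hα.dotProduct_sub hVb hwV).symm.trans (hα'.dotProduct_sub hVb huV)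
      rw [hc, zero_mul] at h
      exact (mul_eq_zero.1 h).resolve_right (sub_ne_zero.2 hwb)
    rw [Nform_finsert_of_eq_zero hαw, Nform_finsert_of_eq_zero hc,
      Nform_eq_of_isAffComb hVi (hα.of_finsert_of_eq_zero hαw) (hα'.of_finsert_of_eq_zero hc),
      sub_self, minner_zero_left]
  · have hWV : (↑(finsert w V) : Set (Fin d → ℝ)) ⊆ Λ ∩ P := fun x hx =>
      (mem_finsert.1 hx).elim (· ▸ hw.1) fun hxV => ⟨(hV hxV).1, (hV hxV).2.1⟩
    rw [Nform_sub_Nform_eq_smul_Nform hwV huV hc, minner_smul_left,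
      hX _ hWV (hVi.finsert hVb hwV hwb) (by rw [card_finsert hwV, hVc]) u hu.1 _
        (isAffComb_exchangeCoeff hwV huV hc hα hα'), mul_zero]

/-- For a facet `F` of a `d`-dimensional polyhedron `P`, the projection of
`N_{V∪{w},w'}` onto the subspace `U` cut out by the equalities of `P` does not depend on
the choice of the apex `w` among the vertices of `P` outside `F`: equivalently, the
difference of two such forms is orthogonal to `U`. -/
theorem statement7 (d : ℕ) (Λ : Set (Fin d → ℝ)) (hΛ : IsStdPeriodic Λ)
    (P : Set (Fin d → ℝ)) (hPpoly : IsPolyhedron P) (hPdim : sdim P = d)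
    (hPvert : P = convexHull ℝ (Λ ∩ P))
    (F : Set (Fin d → ℝ)) (hF : IsFaceOf F P) (hFdim : sdim F = d - 1)
    (V : Finset (Fin d → ℝ))
    (hV : (↑V : Set (Fin d → ℝ)) ⊆ Λ ∩ F)
    (hVi : AffIndep V) (hVc : V.card = d)
    (u w : Fin d → ℝ) (hu : u ∈ (Λ ∩ P) \ F) (hw : w ∈ (Λ ∩ P) \ F) (w' : Fin d → ℝ)
    (α α' : (Fin d → ℝ) → ℝ)
    (hα : IsAffComb (finsert w V) α w') (hα' : IsAffComb (finsert u V) α' w') :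
    ∀ X : Md d, X.IsSymm →
      (∀ W : Finset (Fin d → ℝ), (↑W : Set (Fin d → ℝ)) ⊆ Λ ∩ P → AffIndep W →
        W.card = d + 1 → ∀ u' ∈ Λ ∩ P, ∀ β : (Fin d → ℝ) → ℝ, IsAffComb W β u' →
          minner (Nform W β u') X = 0) →
      minner (Nform (finsert w V) α w' - Nform (finsert u V) α' w') X = 0 :=
  statement7_general d Λ P F hF V hV hVi hVc u w hu hw w' α α' hα hα'

end Vor

end
end

section
/- Let Λ be a standard periodic set in ℝ^d and Q ∈ S̃^d_{≥0}. Then the Delone subdivision of Q equals the set of projections of the at-most-d-dimensional faces of the lifted polyhedron: Del(Q) = {π(F̄) : F̄ is a face of conv{w_Q(x) : x ∈ Λ} of dimension at most d}, where w_Q(x) = (x, Q[x]) and π : ℝ^{d+1} → ℝ^d is the projection onto the first d coordinates. -/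
open Matrix Finset MeasureTheory Polynomial

noncomputable section

/-!
A sphere `Q[c - x] = r²` corresponds to the affine function `x ↦ Q[c] - Q[c - x]`, which is the
linear function with normal `(2Qc, -1)` evaluated on the lift `(x, Q[x])`. Empty spheres thus
become supporting hyperplanes of the lifted set with negative last normal coordinate, and the
points on the sphere become the lifted points on the face.

Conversely, let a supporting hyperplane have normal `(u, s)`. Along lines `x + ℤw` in the periodic
set `Λ` the linear function is a quadratic polynomial in the integer parameter that is bounded
above. If `s < 0`, this makes `u` orthogonal to the integral vectors of `ker Q`; for `Q` in the
rational closure these span `ker Q`, so `u = -2s Qc` for some `c` and the face comes from a sphere.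
If `s ≥ 0`, it forces the hyperplane to contain all lifted points, whose affine span is all of
`ℝ^{d+1}` unless `Q = 0`; and for `Q = 0` the hull of `Λ` is itself a Delone polyhedron.
-/

section ConvexGeometry

variable {E : Type*} [AddCommGroup E] [Module ℝ E]

theorem convexHull_sep_eq_of_forall_le (l : E →ₗ[ℝ] ℝ) {T : Set E} {b : ℝ}
    (hT : ∀ t ∈ T, l t ≤ b) :
    {x ∈ convexHull ℝ T | l x = b} = convexHull ℝ {t ∈ T | l t = b} := by
  set T' := {t ∈ T | l t = b}
  refine Set.Subset.antisymm ?_ fun x hx =>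
    ⟨convexHull_mono (fun t ht => ht.1) hx,
      convexHull_min (fun t ht => ht.2) (convex_hyperplane l.isLinear b) hx⟩
  set K := {x | l x ≤ b ∧ (l x = b → x ∈ convexHull ℝ T')}
  -- A segment in the half-space `l ≤ b` meets the hyperplane `l = b` in an interior point
  -- only if it lies in the hyperplane; hence `K` is convex.
  have hK : Convex ℝ K := by
    refine convex_iff_forall_pos.2 fun y ⟨hy, hy'⟩ z ⟨hz, hz'⟩ s t hs ht hst => ?_
    have hgap : s * (b - l y) + t * (b - l z) = b - l (s • y + t • z) := by
      simp only [map_add, map_smul, smul_eq_mul]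
      linear_combination b * hst
    have hgy := mul_nonneg hs.le (sub_nonneg.2 hy)
    have hgz := mul_nonneg ht.le (sub_nonneg.2 hz)
    refine ⟨by linarith, fun heq => ?_⟩
    rw [heq, sub_self] at hgap
    obtain ⟨hgy0, hgz0⟩ := (add_eq_zero_iff_of_nonneg hgy hgz).1 hgap
    have hyb : l y = b := by
      linarith [(mul_eq_zero.1 hgy0).resolve_left hs.ne']
    have hzb : l z = b := by
      linarith [(mul_eq_zero.1 hgz0).resolve_left ht.ne']
    exact convex_convexHull ℝ T' (hy' hyb) (hz' hzb) hs.le ht.le hst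
  have hTK : T ⊆ K := fun t ht => ⟨hT t ht, fun htb => subset_convexHull ℝ T' ⟨ht, htb⟩⟩
  rintro x ⟨hx, hxb⟩
  exact (convexHull_min hTK hK hx).2 hxb

variable [FiniteDimensional ℝ E]

theorem finrank_vectorSpan_lt_of_forall_eq {l : E →ₗ[ℝ] ℝ} (hl : l ≠ 0) {s : Set E} {b : ℝ}
    (hs : ∀ x ∈ s, l x = b) : Module.finrank ℝ (vectorSpan ℝ s) < Module.finrank ℝ E := by
  have hker : vectorSpan ℝ s ≤ LinearMap.ker l := by
    rw [vectorSpan_def, Submodule.span_le]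
    rintro _ ⟨x, hx, y, hy, rfl⟩
    simp only [SetLike.mem_coe, LinearMap.mem_ker, vsub_eq_sub, map_sub, hs x hx, hs y hy,
      sub_self]
  exact (Submodule.finrank_mono hker).trans_lt
    (Submodule.finrank_lt (mt LinearMap.ker_eq_top.1 hl))

theorem exists_dual_forall_eq_of_finrank_vectorSpan_lt {s : Set E}
    (h : Module.finrank ℝ (vectorSpan ℝ s) < Module.finrank ℝ E) {p : E} (hp : p ∈ s) :
    ∃ l : Module.Dual ℝ E, l ≠ 0 ∧ ∀ x ∈ s, l x = l p := by
  have hne : vectorSpan ℝ s ≠ ⊤ := fun htop => by rw [htop, finrank_top] at h; exact h.false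
  obtain ⟨l, hl, hmap⟩ :=
    Submodule.exists_dual_map_eq_bot_of_lt_top (lt_top_iff_ne_top.2 hne) inferInstance
  refine ⟨l, hl, fun x hx => ?_⟩
  have hmem : l (x -ᵥ p) ∈ (vectorSpan ℝ s).map l :=
    Submodule.mem_map_of_mem (vsub_mem_vectorSpan ℝ hx hp)
  rw [hmap, Submodule.mem_bot, vsub_eq_sub, map_sub, sub_eq_zero] at hmem
  exact hmem

end ConvexGeometry

theorem Matrix.IsHermitian.exists_mulVec_eq_of_forall_ker {n : Type*} [Fintype n]
    [DecidableEq n] {A : Matrix n n ℝ} (hA : A.IsHermitian) {u : n → ℝ}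
    (hu : ∀ z, A *ᵥ z = 0 → z ⬝ᵥ u = 0) : ∃ c, A *ᵥ c = u := by
  have hmem : WithLp.toLp 2 u ∈ (LinearMap.ker A.toEuclideanLin)ᗮ := by
    refine (Submodule.mem_orthogonal _ _).2 fun z hz => ?_
    have hz' : A *ᵥ z.ofLp = 0 := congrArg WithLp.ofLp hz
    simpa [EuclideanSpace.inner_eq_star_dotProduct, dotProduct_comm] using hu _ hz'
  rw [← (isSymmetric_toEuclideanLin_iff.2 hA).orthogonal_range,
    Submodule.orthogonal_orthogonal] at hmem
  obtain ⟨c, hc⟩ := hmem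
  exact ⟨c.ofLp, congrArg WithLp.ofLp hc⟩

theorem nonpos_of_forall_nat_mul_le {c B : ℝ} (h : ∀ n : ℕ, n * c ≤ B) : c ≤ 0 := by
  by_contra! hc
  obtain ⟨n, hn⟩ := exists_nat_gt (B / c)
  have := h n
  rw [div_lt_iff₀ hc] at hn
  linarith

theorem eq_zero_of_forall_int_linear_le {α β b : ℝ} (h : ∀ n : ℤ, α + n * β ≤ b) : β = 0 := by
  have hle : β ≤ 0 := nonpos_of_forall_nat_mul_le (B := b - α) fun n => by
    have h₁ := h n
    push_cast at h₁
    linarith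
  have hge : -β ≤ 0 := nonpos_of_forall_nat_mul_le (B := b - α) fun n => by
    have h₁ := h (-n)
    push_cast at h₁
    linarith
  linarith

theorem nonpos_of_forall_int_quadratic_le {α β γ b : ℝ}
    (h : ∀ n : ℤ, α + n * β + n ^ 2 * γ ≤ b) : γ ≤ 0 := by
  by_contra! hγ
  refine (nonpos_of_forall_nat_mul_le (B := b - α) fun n => ?_).not_gt hγ
  have h₁ := h n
  have h₂ := h (-n)
  have hn : (n : ℝ) ≤ n ^ 2 := by
    rcases Nat.eq_zero_or_pos n with rfl | hn
    · simp
    · nlinarith [(Nat.one_le_cast (α := ℝ)).2 hn]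
  push_cast at h₁ h₂
  nlinarith

namespace Vor

variable {d : ℕ}

theorem dotProduct_mulVec_comm {Q : Md d} (hQ : Q.IsHermitian) (x y : Fin d → ℝ) :
    x ⬝ᵥ Q *ᵥ y = y ⬝ᵥ Q *ᵥ x := by
  rw [dotProduct_mulVec, ← mulVec_transpose, ← conjTranspose_eq_transpose_of_trivial, hQ.eq,
    dotProduct_comm]

theorem qf_add {Q : Md d} (hQ : Q.IsHermitian) (x y : Fin d → ℝ) :
    qf Q (x + y) = qf Q x + 2 * (Q *ᵥ x ⬝ᵥ y) + qf Q y := by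
  simp only [qf, mulVec_add, dotProduct_add, add_dotProduct]
  rw [dotProduct_mulVec_comm hQ x y, dotProduct_comm (Q *ᵥ x) y]
  ring

theorem qf_smul (Q : Md d) (r : ℝ) (x : Fin d → ℝ) : qf Q (r • x) = r ^ 2 * qf Q x := by
  simp only [qf, mulVec_smul, dotProduct_smul, smul_dotProduct, smul_eq_mul]
  ring

theorem qf_sub {Q : Md d} (hQ : Q.IsHermitian) (x y : Fin d → ℝ) :
    qf Q (x - y) = qf Q x - 2 * (Q *ᵥ x ⬝ᵥ y) + qf Q y := by
  rw [sub_eq_add_neg, qf_add hQ, ← neg_one_smul ℝ y, qf_smul, dotProduct_smul, smul_eq_mul]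
  ring

theorem qf_single (Q : Md d) (j : Fin d) : qf Q (Pi.single j 1) = Q j j := by
  simp [qf]

theorem qf_nonneg {Q : Md d} (hQ : Q.PosSemidef) (x : Fin d → ℝ) : 0 ≤ qf Q x := by
  simpa [qf] using hQ.dotProduct_mulVec_nonneg x

theorem qf_conjQ (U : Matrix (Fin d) (Fin d) ℤ) (Q : Md d) (x : Fin d → ℝ) :
    qf (conjQ U Q) x = qf Q (rmat U *ᵥ x) := by
  simp only [qf, conjQ, ← mulVec_mulVec, dotProduct_mulVec _ (rmat U)ᵀ, vecMul_transpose]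

theorem intVec_single (j : Fin d) : intVec (Pi.single j 1) = Pi.single j (1 : ℝ) := by
  ext i
  by_cases h : i = j <;> simp [intVec, h]

theorem IsStdPeriodic.nonempty {Λ : Set (Fin d → ℝ)} (hΛ : IsStdPeriodic Λ) : Λ.Nonempty := by
  obtain ⟨m, hm, t, rfl⟩ := hΛ
  exact ⟨_, ⟨0, hm⟩, 0, rfl⟩

theorem IsStdPeriodic.add_int_smul_mem {Λ : Set (Fin d → ℝ)} (hΛ : IsStdPeriodic Λ)
    {x : Fin d → ℝ} (hx : x ∈ Λ) (w : Fin d → ℤ) (n : ℤ) : x + (n : ℝ) • intVec w ∈ Λ := by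
  obtain ⟨m, -, t, rfl⟩ := hΛ
  obtain ⟨i, v, rfl⟩ := hx
  refine ⟨i, v + n • w, ?_⟩
  ext j
  simp only [intVec, Pi.add_apply, Pi.smul_apply, smul_eq_mul]
  push_cast
  ring

theorem IsStdPeriodic.eq_zero_of_forall_dotProduct_le {Λ : Set (Fin d → ℝ)}
    (hΛ : IsStdPeriodic Λ) {u : Fin d → ℝ} {b : ℝ} (h : ∀ x ∈ Λ, u ⬝ᵥ x ≤ b) : u = 0 := by
  obtain ⟨t, ht⟩ := hΛ.nonempty
  ext j
  refine eq_zero_of_forall_int_linear_le (α := u ⬝ᵥ t) (b := b) fun n => ?_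
  simpa [intVec_single, dotProduct_add] using h _ (hΛ.add_int_smul_mem ht (Pi.single j 1) n)

theorem projd_liftQ (Q : Md d) (x : Fin d → ℝ) : projd (liftQ Q x) = x := by
  ext i
  simp [projd, liftQ]

theorem projd_image_convexHull_liftQ (Q : Md d) (S : Set (Fin d → ℝ)) :
    projd '' convexHull ℝ (liftQ Q '' S) = convexHull ℝ S := by
  have hlin : (projd : (Fin (d + 1) → ℝ) → Fin d → ℝ) = LinearMap.funLeft ℝ ℝ Fin.castSucc := rfl
  rw [hlin, LinearMap.image_convexHull, ← hlin, Set.image_image]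
  simp only [projd_liftQ, Set.image_id']

theorem dotProduct_liftQ (a : Fin (d + 1) → ℝ) (Q : Md d) (x : Fin d → ℝ) :
    a ⬝ᵥ liftQ Q x = projd a ⬝ᵥ x + a (Fin.last d) * qf Q x := by
  simp [liftQ, dotProduct, Fin.sum_univ_castSucc, projd]

theorem dotProduct_liftQ_add_smul {Q : Md d} (hQ : Q.IsHermitian) (a : Fin (d + 1) → ℝ)
    (v w : Fin d → ℝ) (r : ℝ) :
    a ⬝ᵥ liftQ Q (v + r • w) = a ⬝ᵥ liftQ Q v
      + r * (projd a ⬝ᵥ w + 2 * a (Fin.last d) * (Q *ᵥ v ⬝ᵥ w))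
      + r ^ 2 * (a (Fin.last d) * qf Q w) := by
  simp only [dotProduct_liftQ, qf_add hQ, qf_smul, dotProduct_add, dotProduct_smul, smul_eq_mul]
  ring

theorem dotProduct_liftQ_eq_of_projd_eq {Q : Md d} (hQ : Q.IsHermitian) {a : Fin (d + 1) → ℝ}
    {c : Fin d → ℝ} (hc : projd a = (-2 * a (Fin.last d)) • Q *ᵥ c) (v : Fin d → ℝ) :
    a ⬝ᵥ liftQ Q v = a (Fin.last d) * (qf Q (c - v) - qf Q c) := by
  rw [dotProduct_liftQ, hc, qf_sub hQ, smul_dotProduct, smul_eq_mul]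
  ring

theorem convexHull_liftQ_sep_eq {Λ : Set (Fin d → ℝ)} {Q : Md d} {a : Fin (d + 1) → ℝ} {b : ℝ}
    (hb : ∀ x ∈ Λ, a ⬝ᵥ liftQ Q x ≤ b) :
    {x ∈ convexHull ℝ (liftQ Q '' Λ) | a ⬝ᵥ x = b}
      = convexHull ℝ (liftQ Q '' {v ∈ Λ | a ⬝ᵥ liftQ Q v = b}) := by
  have := convexHull_sep_eq_of_forall_le (dotProductEquiv ℝ (Fin (d + 1)) a)
    (T := liftQ Q '' Λ) (b := b) (by rintro _ ⟨v, hv, rfl⟩; exact hb v hv)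
  simp only [dotProductEquiv_apply_apply] at this
  rw [this]
  exact congrArg _ (Set.image_inter_preimage _ _ _).symm

section BoundedLift

variable {Λ : Set (Fin d → ℝ)} {Q : Md d} {a : Fin (d + 1) → ℝ} {b : ℝ}

theorem eq_zero_of_liftQ_le_of_last_pos (hΛ : IsStdPeriodic Λ) (hQ : Q.PosSemidef)
    (hb : ∀ x ∈ Λ, a ⬝ᵥ liftQ Q x ≤ b) (ha : 0 < a (Fin.last d)) : Q = 0 := by
  obtain ⟨t, ht⟩ := hΛ.nonempty
  refine hQ.trace_eq_zero_iff.1 (Finset.sum_eq_zero fun j _ => ?_)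
  have hquad : a (Fin.last d) * qf Q (Pi.single j 1) ≤ 0 :=
    nonpos_of_forall_int_quadratic_le fun n => by
      simpa [dotProduct_liftQ_add_smul hQ.isHermitian, intVec_single] using
        hb _ (hΛ.add_int_smul_mem ht (Pi.single j 1) n)
  rw [qf_single] at hquad
  exact le_antisymm (nonpos_of_mul_nonpos_right hquad ha) hQ.diag_nonneg

theorem projd_dotProduct_eq_zero_of_liftQ_le (hΛ : IsStdPeriodic Λ) (hQ : Q.IsHermitian)
    (hb : ∀ x ∈ Λ, a ⬝ᵥ liftQ Q x ≤ b) {w : Fin d → ℤ} (hw : Q *ᵥ intVec w = 0) :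
    projd a ⬝ᵥ intVec w = 0 := by
  obtain ⟨t, ht⟩ := hΛ.nonempty
  have hqw : qf Q (intVec w) = 0 := by rw [qf, hw, dotProduct_zero]
  have htw : Q *ᵥ t ⬝ᵥ intVec w = 0 := by
    rw [dotProduct_comm, dotProduct_mulVec_comm hQ, hw, dotProduct_zero]
  refine eq_zero_of_forall_int_linear_le (α := a ⬝ᵥ liftQ Q t) (b := b) fun n => ?_
  simpa [dotProduct_liftQ_add_smul hQ, hqw, htw] using hb _ (hΛ.add_int_smul_mem ht w n)

theorem dotProduct_liftQ_eq_zero_of_last_nonneg (hΛ : IsStdPeriodic Λ) (hQ : Q.PosSemidef)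
    (hb : ∀ x ∈ Λ, a ⬝ᵥ liftQ Q x ≤ b) (ha : 0 ≤ a (Fin.last d)) :
    ∀ x ∈ Λ, a ⬝ᵥ liftQ Q x = 0 := by
  have hquad : ∀ x, a (Fin.last d) * qf Q x = 0 := by
    rcases ha.eq_or_lt with h0 | hpos
    · simp [← h0]
    · simp [eq_zero_of_liftQ_le_of_last_pos hΛ hQ hb hpos, qf]
  have hproj : projd a = 0 := hΛ.eq_zero_of_forall_dotProduct_le fun x hx => by
    simpa [dotProduct_liftQ, hquad] using hb x hx
  intro x _
  rw [dotProduct_liftQ, hproj, hquad, zero_dotProduct, add_zero]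

end BoundedLift

theorem eq_zero_of_finrank_vectorSpan_liftQ_le {Λ : Set (Fin d → ℝ)} (hΛ : IsStdPeriodic Λ)
    {Q : Md d} (hQ : Q.PosSemidef)
    (h : Module.finrank ℝ (vectorSpan ℝ (liftQ Q '' Λ)) ≤ d) : Q = 0 := by
  obtain ⟨t, ht⟩ := hΛ.nonempty
  obtain ⟨l, hl, hconst⟩ := exists_dual_forall_eq_of_finrank_vectorSpan_lt
    (by rwa [Module.finrank_fin_fun, Nat.lt_succ_iff]) (Set.mem_image_of_mem (liftQ Q) ht)
  set a := (dotProductEquiv ℝ (Fin (d + 1))).symm l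
  have hla : ∀ y, l y = a ⬝ᵥ y := fun y => by
    rw [← dotProductEquiv_apply_apply ℝ, LinearEquiv.apply_symm_apply]
  have ha : a ≠ 0 := by simpa [a] using hl
  have hconst' : ∀ x ∈ Λ, a ⬝ᵥ liftQ Q x = a ⬝ᵥ liftQ Q t := fun x hx => by
    rw [← hla, ← hla, hconst _ (Set.mem_image_of_mem _ hx)]
  rcases lt_trichotomy (a (Fin.last d)) 0 with hneg | hzero | hpos
  · exact eq_zero_of_liftQ_le_of_last_pos hΛ hQ (a := -a) (b := -(a ⬝ᵥ liftQ Q t))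
      (fun x hx => by rw [neg_dotProduct, hconst' x hx]) (by simpa using hneg)
  · refine absurd ?_ ha
    have hproj : projd a = 0 := hΛ.eq_zero_of_forall_dotProduct_le fun x hx => by
      simpa [dotProduct_liftQ, hzero] using (hconst' x hx).le
    ext i
    induction i using Fin.lastCases with
    | last => exact hzero
    | cast j => exact congrFun hproj j
  · exact eq_zero_of_liftQ_le_of_last_pos hΛ hQ (fun x hx => (hconst' x hx).le) hpos

theorem eq_zero_of_mulVec_eq_zero_of_posDef_block {M : Md d} {k : ℕ}
    (hcol : ∀ i j : Fin d, (j : ℕ) < k → M i j = 0)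
    (hpos : ∀ x : Fin d → ℝ, (∀ i : Fin d, (i : ℕ) < k → x i = 0) → x ≠ 0 → 0 < qf M x)
    {x : Fin d → ℝ} (hx : M *ᵥ x = 0) {i : Fin d} (hi : ¬ (i : ℕ) < k) : x i = 0 := by
  set x₁ : Fin d → ℝ := fun j => if (j : ℕ) < k then x j else 0
  have hx₁ : M *ᵥ x₁ = 0 := by
    ext j
    show ∑ l, M j l * x₁ l = 0
    refine Finset.sum_eq_zero fun l _ => ?_
    by_cases hl : (l : ℕ) < k <;> simp [x₁, hl, hcol j l]
  have hx₂ : x - x₁ = 0 := by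
    by_contra hne
    refine (hpos _ (fun j hj => by simp [x₁, hj]) hne).ne' ?_
    rw [qf, mulVec_sub, hx, hx₁, sub_zero, dotProduct_zero]
  simpa [x₁, hi] using congrFun hx₂ i

theorem mem_span_latticeZ_of_mulVec_eq_zero {Q : Md d} (hQ : Q ∈ RationalClosure d)
    {z : Fin d → ℝ} (hz : Q *ᵥ z = 0) :
    z ∈ Submodule.span ℝ {y ∈ latticeZ d | Q *ᵥ y = 0} := by
  obtain ⟨hpsd, U, hU, k, -, hzero, hpos⟩ := hQ
  set R := rmat U
  have hR : IsUnit R.det := by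
    rw [show R.det = (U.det : ℝ) from (RingHom.map_det (Int.castRingHom ℝ) U).symm]
    exact hU.map (Int.castRingHom ℝ)
  set x := R⁻¹ *ᵥ z
  have hRx : R *ᵥ x = z := by rw [mulVec_mulVec, mul_nonsing_inv _ hR, one_mulVec]
  have hx : ∀ i : Fin d, ¬ (i : ℕ) < k → x i = 0 := fun i hi =>
    eq_zero_of_mulVec_eq_zero_of_posDef_block (fun i j hj => hzero i j (Or.inr hj)) hpos
      (by rw [conjQ, ← mulVec_mulVec, ← mulVec_mulVec, hRx, hz, mulVec_zero]) hi
  have hcol : ∀ i : Fin d, (i : ℕ) < k → R *ᵥ Pi.single i 1 ∈ {y ∈ latticeZ d | Q *ᵥ y = 0} := by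
    intro i hi
    refine ⟨⟨fun j => U j i, ?_⟩, ?_⟩
    · ext j
      simp [R, rmat, intVec]
    · have hqf := qf_conjQ U Q (Pi.single i 1)
      rw [qf_single, hzero i i (Or.inl hi)] at hqf
      exact (hpsd.dotProduct_mulVec_zero_iff _).1 (by simpa [qf] using hqf.symm)
  rw [← hRx, ← Finset.univ_sum_single x, mulVec_sum]
  refine Submodule.sum_mem _ fun i _ => ?_
  by_cases hi : (i : ℕ) < k
  · rw [← mul_one (x i), ← smul_eq_mul, Pi.single_smul, mulVec_smul]
    exact Submodule.smul_mem _ _ (Submodule.subset_span (hcol i hi))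
  · rw [hx i hi, Pi.single_zero, mulVec_zero]
    exact zero_mem _

theorem exists_mulVec_eq_projd_of_liftQ_le {Λ : Set (Fin d → ℝ)} (hΛ : IsStdPeriodic Λ)
    {Q : Md d} (hQ : Q ∈ RationalClosure d) {a : Fin (d + 1) → ℝ} {b : ℝ}
    (hb : ∀ x ∈ Λ, a ⬝ᵥ liftQ Q x ≤ b) : ∃ c, Q *ᵥ c = projd a := by
  refine hQ.1.isHermitian.exists_mulVec_eq_of_forall_ker fun z hz => ?_
  have hspan : Submodule.span ℝ {y ∈ latticeZ d | Q *ᵥ y = 0}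
      ≤ LinearMap.ker (dotProductEquiv ℝ (Fin d) (projd a)) := by
    rw [Submodule.span_le]
    rintro _ ⟨⟨w, rfl⟩, hw⟩
    exact projd_dotProduct_eq_zero_of_liftQ_le hΛ hQ.1.isHermitian hb hw
  rw [dotProduct_comm]
  exact hspan (mem_span_latticeZ_of_mulVec_eq_zero hQ hz)

theorem exists_face_of_isDelonePoly {Λ : Set (Fin d → ℝ)} {Q : Md d} (hQ : Q.IsHermitian)
    {P : Set (Fin d → ℝ)} (hP : IsDelonePoly Λ Q P) :
    ∃ Fb : Set (Fin (d + 1) → ℝ), IsFaceOf Fb (convexHull ℝ (liftQ Q '' Λ)) ∧ Fb.Nonempty ∧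
      Module.finrank ℝ ↥(vectorSpan ℝ Fb) ≤ d ∧ P = projd '' Fb := by
  obtain ⟨S, hSΛ, ⟨v₀, hv₀⟩, rfl, c, r, hsphere, houtside⟩ := hP
  set a : Fin (d + 1) → ℝ := Fin.snoc ((2 : ℝ) • Q *ᵥ c) (-1)
  have hlast : a (Fin.last d) = -1 := Fin.snoc_last _ _
  have hval : ∀ v, a ⬝ᵥ liftQ Q v = qf Q c - qf Q (c - v) := fun v => by
    rw [dotProduct_liftQ_eq_of_projd_eq hQ (c := c) ?_, hlast]
    · ring
    · ext i
      simp [a, projd, hlast]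
  set b := qf Q c - r ^ 2
  have hb : ∀ v ∈ Λ, a ⬝ᵥ liftQ Q v ≤ b := fun v hv => by
    by_cases hvS : v ∈ S
    · rw [hval, hsphere v hvS]
    · linarith [hval v, houtside v hv hvS]
  have hS : {v ∈ Λ | a ⬝ᵥ liftQ Q v = b} = S := by
    ext v
    refine ⟨fun ⟨hv, hvb⟩ => ?_, fun hvS => ⟨hSΛ hvS, by rw [hval, hsphere v hvS]⟩⟩
    by_contra hvS
    linarith [hval v, houtside v hv hvS]
  have hface := convexHull_liftQ_sep_eq hb
  rw [hS] at hface
  refine ⟨_, ⟨a, b, fun x hx => ?_, rfl⟩, ?_, ?_, ?_⟩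
  · exact convexHull_min (by rintro _ ⟨v, hv, rfl⟩; exact hb v hv)
      (convex_halfSpace_le (dotProductEquiv ℝ _ a).isLinear b) hx
  · rw [hface]
    exact convexHull_nonempty_iff.2 ⟨_, Set.mem_image_of_mem _ hv₀⟩
  · have ha : a ≠ 0 := fun h => by simp [h] at hlast
    have := finrank_vectorSpan_lt_of_forall_eq ((dotProductEquiv ℝ _).map_ne_zero_iff.2 ha)
      (s := {x ∈ convexHull ℝ (liftQ Q '' Λ) | a ⬝ᵥ x = b}) fun x hx => hx.2
    rwa [Module.finrank_fin_fun, Nat.lt_succ_iff] at this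
  · rw [hface, projd_image_convexHull_liftQ]

theorem isDelonePoly_projd_face_of_last_neg {Λ : Set (Fin d → ℝ)} {Q : Md d}
    (hQ : Q.PosSemidef) {a : Fin (d + 1) → ℝ} {b : ℝ} {c : Fin d → ℝ} (hc : Q *ᵥ c = projd a)
    (hneg : a (Fin.last d) < 0) (hb : ∀ x ∈ Λ, a ⬝ᵥ liftQ Q x ≤ b)
    (hne : {x ∈ convexHull ℝ (liftQ Q '' Λ) | a ⬝ᵥ x = b}.Nonempty) :
    IsDelonePoly Λ Q (projd '' {x ∈ convexHull ℝ (liftQ Q '' Λ) | a ⬝ᵥ x = b}) := by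
  set s := a (Fin.last d)
  set center := (-2 * s)⁻¹ • c
  have hval : ∀ v, a ⬝ᵥ liftQ Q v = s * (qf Q (center - v) - qf Q center) :=
    dotProduct_liftQ_eq_of_projd_eq hQ.isHermitian (by
      rw [mulVec_smul, hc, smul_smul, mul_inv_cancel₀ (by linarith), one_smul])
  rw [convexHull_liftQ_sep_eq hb] at hne ⊢
  rw [projd_image_convexHull_liftQ]
  obtain ⟨v₀, hv₀⟩ := Set.image_nonempty.1 (convexHull_nonempty_iff.1 hne)
  have hsphere : ∀ v, a ⬝ᵥ liftQ Q v = b → qf Q (center - v) = qf Q center + b / s :=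
    fun v hv => by
      rw [hval, mul_comm] at hv
      linarith [eq_div_of_mul_eq hneg.ne hv]
  have hρ : 0 ≤ qf Q center + b / s := hsphere v₀ hv₀.2 ▸ qf_nonneg hQ _
  refine ⟨_, fun v hv => hv.1, ⟨v₀, hv₀⟩, rfl, center, √(qf Q center + b / s),
    fun v hv => by rw [Real.sq_sqrt hρ, hsphere v hv.2], fun v hv hvS => ?_⟩
  have hlt : s * (qf Q (center - v) - qf Q center) < b :=
    hval v ▸ (hb v hv).lt_of_ne fun h => hvS ⟨hv, h⟩
  rw [Real.sq_sqrt hρ, ← lt_sub_iff_add_lt']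
  exact (div_lt_iff_of_neg hneg).2 (by rwa [mul_comm] at hlt)

theorem isDelonePoly_projd_face_of_last_nonneg {Λ : Set (Fin d → ℝ)} (hΛ : IsStdPeriodic Λ)
    {Q : Md d} (hQ : Q.PosSemidef) {a : Fin (d + 1) → ℝ} {b : ℝ}
    (hb : ∀ x ∈ Λ, a ⬝ᵥ liftQ Q x ≤ b) (ha : 0 ≤ a (Fin.last d))
    (hne : {x ∈ convexHull ℝ (liftQ Q '' Λ) | a ⬝ᵥ x = b}.Nonempty)
    (hdim : Module.finrank ℝ ↥(vectorSpan ℝ {x ∈ convexHull ℝ (liftQ Q '' Λ) | a ⬝ᵥ x = b}) ≤ d) :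
    IsDelonePoly Λ Q (projd '' {x ∈ convexHull ℝ (liftQ Q '' Λ) | a ⬝ᵥ x = b}) := by
  have hzero := dotProduct_liftQ_eq_zero_of_last_nonneg hΛ hQ hb ha
  have hflat : ∀ x ∈ convexHull ℝ (liftQ Q '' Λ), a ⬝ᵥ x = 0 := fun x hx =>
    convexHull_min (by rintro _ ⟨v, hv, rfl⟩; exact hzero v hv)
      (convex_hyperplane (dotProductEquiv ℝ _ a).isLinear 0) hx
  obtain ⟨y, hy, hyb⟩ := hne
  have hface : {x ∈ convexHull ℝ (liftQ Q '' Λ) | a ⬝ᵥ x = b} = convexHull ℝ (liftQ Q '' Λ) :=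
    Set.sep_eq_self_iff_mem_true.2 fun x hx => by rw [hflat x hx, ← hyb, hflat y hy]
  rw [hface, ← direction_affineSpan, affineSpan_convexHull, direction_affineSpan] at hdim
  obtain rfl := eq_zero_of_finrank_vectorSpan_liftQ_le hΛ hQ hdim
  rw [hface, projd_image_convexHull_liftQ]
  exact ⟨Λ, subset_rfl, hΛ.nonempty, rfl, 0, 0, fun v _ => by simp [qf],
    fun v hv hvΛ => absurd hv hvΛ⟩

/-- The Delone subdivision of `Q` consists of the projections of the
at-most-`d`-dimensional faces of the lifted polyhedron `conv{(x, Q[x]) : x ∈ Λ}`. -/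
theorem statement11 (d : ℕ) (Λ : Set (Fin d → ℝ)) (hΛ : IsStdPeriodic Λ)
    (Q : Md d) (hQ : Q ∈ RationalClosure d) :
    DelSub Λ Q =
      {P | ∃ Fb : Set (Fin (d + 1) → ℝ),
        IsFaceOf Fb (convexHull ℝ (liftQ Q '' Λ)) ∧ Fb.Nonempty ∧
        Module.finrank ℝ ↥(vectorSpan ℝ Fb) ≤ d ∧ P = projd '' Fb} := by
  ext P
  refine ⟨exists_face_of_isDelonePoly hQ.1.isHermitian, ?_⟩
  rintro ⟨Fb, ⟨a, b, hsupp, rfl⟩, hne, hdim, rfl⟩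
  have hb : ∀ x ∈ Λ, a ⬝ᵥ liftQ Q x ≤ b := fun x hx =>
    hsupp _ (subset_convexHull ℝ _ (Set.mem_image_of_mem _ hx))
  rcases lt_or_ge (a (Fin.last d)) 0 with hneg | hnonneg
  · obtain ⟨c, hc⟩ := exists_mulVec_eq_projd_of_liftQ_le hΛ hQ hb
    exact isDelonePoly_projd_face_of_last_neg hQ.1 hc hneg hb hne
  · exact isDelonePoly_projd_face_of_last_nonneg hΛ hQ.1 hb hnonneg hne hdim

end Vor

end
end
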